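/- arXiv:2407.21741 — 9 statements merged into one kernel-verified Lean document; each statement's English description precedes it below -/
import Mathlib

section
/- A linearly topologized vector space V over a discrete field k is a Tate vector space if and only if V is a topological direct sum V = L ⊕ D of a complete c-lattice L and a d-lattice D; that is, there exist closed linear subspaces L, D ⊆ V with L ∩ D = {0} and L + D = V such that the addition map L × D → V is a topological isomorphism, where L is open, complete with respect to the induced uniformity, and linearly bounded, and D is discrete in the induced topology. -/
/-!
If `L` is a c-lattice, any algebraic complement `D` meets the open subspace `L` only in `0`,
so `D` is discrete, hence closed in the Hausdorff group `V`, and addition `L × D → V` is open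
because `L` is. Conversely, a uniform group with a complete neighbourhood `K` of `0` is complete:
a Cauchy filter eventually lies in a single translate of `K`, which is complete.
-/

open Filter Topology

/-- A linearly topologized vector space over a discrete field `k`: the neighborhood
filter of `0` has a basis consisting of open linear subspaces. -/
def IsLinearlyTopologized (k V : Type*) [Field k] [AddCommGroup V] [Module k V]
    [TopologicalSpace V] : Prop :=
  (nhds (0 : V)).HasBasis (fun U : Submodule k V => IsOpen (U : Set V))
    (fun U => (U : Set V))

/-- `L` is linearly bounded if `L/(L ∩ U)` is finite dimensional for every open linear
subspace `U`. -/
def LinearlyBounded (k : Type*) {V : Type*} [Field k] [AddCommGroup V] [Module k V]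
    [TopologicalSpace V] (L : Submodule k V) : Prop :=
  ∀ U : Submodule k V, IsOpen (U : Set V) →
    FiniteDimensional k (↥L ⧸ (U.comap L.subtype))

/-- A linear subspace is linearly compact if it is closed, complete with respect to the
induced uniformity, and linearly bounded. -/
def LinearlyCompact (k : Type*) {V : Type*} [Field k] [AddCommGroup V] [Module k V]
    [UniformSpace V] (L : Submodule k V) : Prop :=
  IsClosed (L : Set V) ∧ IsComplete (L : Set V) ∧ LinearlyBounded k L

/-- A linearly topologized vector space is a Tate vector space if it is complete and
admits a c-lattice, i.e. an open linearly compact linear subspace. -/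
def IsTate (k V : Type*) [Field k] [AddCommGroup V] [Module k V] [UniformSpace V] : Prop :=
  CompleteSpace V ∧ ∃ L : Submodule k V, IsOpen (L : Set V) ∧ LinearlyCompact k L

namespace IsUniformAddGroup

variable {G : Type*} [AddGroup G] [UniformSpace G] [IsUniformAddGroup G]

theorem completeSpace_of_isComplete_of_mem_nhds {K : Set G} (hK : K ∈ 𝓝 0)
    (hKc : IsComplete K) : CompleteSpace G where
  complete {f} hf := by
    have : f.NeBot := hf.1
    obtain ⟨x, hx⟩ : ∃ x, ∀ᶠ y in f, y - x ∈ K := by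
      rw [cauchy_iff_le, uniformity_eq_comap_nhds_zero, ← tendsto_iff_comap] at hf
      exact (hf.eventually_mem hK).curry.exists
    have hKx : IsComplete ((· + x) '' K) :=
      (isComplete_image_iff (isUniformEmbedding_translate_add x).isUniformInducing).2 hKc
    obtain ⟨l, -, hl⟩ := hKx f hf <| le_principal_iff.2 <|
      hx.mono fun y hy => ⟨y - x, hy, sub_add_cancel y x⟩
    exact ⟨l, hl⟩

end IsUniformAddGroup

section TopologicalAddGroup

variable {G : Type*} [AddGroup G] [TopologicalSpace G] [IsTopologicalAddGroup G]

theorem isOpenMap_add_of_isOpen_left {s t : Set G} (hs : IsOpen s) :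
    IsOpenMap (fun p : s × t => (p.1 : G) + p.2) := by
  intro W hW
  have hslices : (fun p : s × t => (p.1 : G) + p.2) '' W =
      ⋃ b : t, (· + (b : G)) '' (Subtype.val '' ((fun a : s => (a, b)) ⁻¹' W)) := by
    ext v
    simp only [Set.mem_image, Set.mem_iUnion, Set.mem_preimage, Prod.exists]
    constructor
    · rintro ⟨a, b, hab, rfl⟩
      exact ⟨b, a, ⟨a, hab, rfl⟩, rfl⟩
    · rintro ⟨b, _, ⟨a, hab, rfl⟩, rfl⟩
      exact ⟨a, b, hab, rfl⟩
  rw [hslices]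
  exact isOpen_iUnion fun b => isOpenMap_add_right (b : G) _ <|
    hs.isOpenMap_subtype_val _ (hW.preimage (continuous_id.prodMk continuous_const))

theorem AddSubgroup.discreteTopology_of_isOpen_of_disjoint {H K : AddSubgroup G}
    (hH : IsOpen (H : Set G)) (hHK : Disjoint H K) : DiscreteTopology K := by
  rw [discreteTopology_iff_isOpen_singleton_zero]
  convert hH.preimage continuous_subtype_val
  ext x
  simp only [Set.mem_singleton_iff, Set.mem_preimage, SetLike.mem_coe]
  refine ⟨fun hx => hx ▸ H.zero_mem, fun hx => ?_⟩
  exact Subtype.ext (AddSubgroup.disjoint_def.1 hHK hx x.2)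

end TopologicalAddGroup

theorem isTate_iff_topological_direct_sum_general
    {k : Type*} [Field k]
    {V : Type*} [AddCommGroup V] [Module k V] [UniformSpace V]
    [IsUniformAddGroup V] [T2Space V] :
    IsTate k V ↔
      ∃ L D : Submodule k V,
        IsClosed (L : Set V) ∧ IsClosed (D : Set V) ∧
        L ⊓ D = ⊥ ∧ L ⊔ D = ⊤ ∧
        Function.Bijective (fun p : ↥L × ↥D => (p.1 : V) + (p.2 : V)) ∧
        Continuous (fun p : ↥L × ↥D => (p.1 : V) + (p.2 : V)) ∧
        IsOpenMap (fun p : ↥L × ↥D => (p.1 : V) + (p.2 : V)) ∧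
        IsOpen (L : Set V) ∧ IsComplete (L : Set V) ∧ LinearlyBounded k L ∧
        DiscreteTopology ↥D := by
  constructor
  · rintro ⟨-, L, hLo, hLc, hLcomp, hLb⟩
    obtain ⟨D, hLD⟩ := L.exists_isCompl
    have hdisj : Disjoint L.toAddSubgroup D.toAddSubgroup :=
      AddSubgroup.disjoint_def.2 fun hL hD => Submodule.disjoint_def.1 hLD.disjoint _ hL hD
    have hDdisc : DiscreteTopology D :=
      AddSubgroup.discreteTopology_of_isOpen_of_disjoint hLo hdisj
    have hDc : IsClosed (D : Set V) := D.toAddSubgroup.isClosed_of_discrete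
    refine ⟨L, D, hLc, hDc, hLD.inf_eq_bot, hLD.sup_eq_top, ?_, by fun_prop,
      isOpenMap_add_of_isOpen_left hLo, hLo, hLcomp, hLb, hDdisc⟩
    exact (Submodule.prodEquivOfIsCompl L D hLD).bijective
  · rintro ⟨L, -, hLc, -, -, -, -, -, -, hLo, hLcomp, hLb, -⟩
    exact ⟨IsUniformAddGroup.completeSpace_of_isComplete_of_mem_nhds
      (hLo.mem_nhds L.zero_mem) hLcomp, L, hLo, hLc, hLcomp, hLb⟩

/-- A linearly topologized vector space `V` over a discrete field is a Tate vector space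
if and only if it is a topological direct sum `V = L ⊕ D` of a complete c-lattice `L`
(an open, complete, linearly bounded closed subspace) and a d-lattice `D` (a closed
subspace which is discrete in the induced topology): the addition map `L × D → V` is a
topological isomorphism. -/
theorem isTate_iff_topological_direct_sum
    {k : Type*} [Field k] [TopologicalSpace k] [DiscreteTopology k]
    {V : Type*} [AddCommGroup V] [Module k V] [UniformSpace V]
    [IsUniformAddGroup V] [ContinuousSMul k V] [T2Space V]
    (hV : IsLinearlyTopologized k V) :
    IsTate k V ↔
      ∃ L D : Submodule k V,
        IsClosed (L : Set V) ∧ IsClosed (D : Set V) ∧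
        L ⊓ D = ⊥ ∧ L ⊔ D = ⊤ ∧
        Function.Bijective (fun p : ↥L × ↥D => (p.1 : V) + (p.2 : V)) ∧
        Continuous (fun p : ↥L × ↥D => (p.1 : V) + (p.2 : V)) ∧
        IsOpenMap (fun p : ↥L × ↥D => (p.1 : V) + (p.2 : V)) ∧
        IsOpen (L : Set V) ∧ IsComplete (L : Set V) ∧ LinearlyBounded k L ∧
        DiscreteTopology ↥D :=
  isTate_iff_topological_direct_sum_general
end

section
/- Let A and B be linearly topologized vector spaces over a discrete field k. If A is discrete and B is linearly compact (i.e., B is complete and every open linear subspace of B has finite codimension), then Hom(A,B) with the compact-open topology is linearly compact: it is complete and every open linear subspace of Hom(A,B) has finite codimension. -/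
open Filter Topology

/-- The compact-open topology on the space `A →L[k] B` of continuous linear maps: the
neighborhood filter of `0` has as basis the subspaces
`S_{K,W} = {f | f(K) ⊆ W}` for `K ⊆ A` linearly compact and `W ⊆ B` open linear. -/
def IsCompactOpenTopology (k : Type*) {A B : Type*} [Field k] [TopologicalSpace k]
    [AddCommGroup A] [Module k A] [UniformSpace A]
    [AddCommGroup B] [Module k B] [TopologicalSpace B]
    [TopologicalSpace (A →L[k] B)] : Prop :=
  (nhds (0 : A →L[k] B)).HasBasis
    (fun p : Submodule k A × Submodule k B =>
      LinearlyCompact k p.1 ∧ IsOpen ((p.2 : Set B)))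
    (fun p => {f : A →L[k] B | ∀ x ∈ p.1, f x ∈ p.2})

/-!
Since `A` is discrete, its linearly compact subspaces are exactly the finite-dimensional ones,
so the compact-open topology on `Hom(A,B)` is the topology of pointwise convergence.
A Cauchy filter on `Hom(A,B)` is therefore pointwise Cauchy; its pointwise limit is linear,
continuous because `A` is discrete, and is a limit for the compact-open topology.
An open subspace of `Hom(A,B)` contains some `S_{K,W}`, the kernel of the restriction map
`Hom(A,B) → Hom_k(K, B/W)` whose target is finite dimensional, so it has finite codimension.
-/

section DiscreteDomain

variable {k A : Type*} [Field k] [AddCommGroup A] [Module k A] [UniformSpace A]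
  [DiscreteTopology A]

theorem DiscreteTopology.discreteUniformity [IsUniformAddGroup A] : DiscreteUniformity A := by
  rw [discreteUniformity_iff_eq_principal_setRelId, uniformity_eq_comap_nhds_zero,
    nhds_discrete, Filter.comap_pure]
  congr 1
  ext p
  simp [SetRel.id, sub_eq_zero, eq_comm]

theorem LinearlyCompact.finiteDimensional {K : Submodule k A} (hK : LinearlyCompact k K) :
    FiniteDimensional k K := by
  have h := hK.2.2 ⊥ (isOpen_discrete _)
  rw [Submodule.comap_bot, Submodule.ker_subtype] at h
  exact (Submodule.quotEquivOfEqBot ⊥ rfl).finiteDimensional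

theorem linearlyCompact_of_finiteDimensional [IsUniformAddGroup A] (K : Submodule k A)
    [FiniteDimensional k K] : LinearlyCompact k K := by
  have := DiscreteTopology.discreteUniformity (A := A)
  exact ⟨isClosed_discrete _, (isClosed_discrete _).isComplete, fun _ _ => inferInstance⟩

end DiscreteDomain

namespace IsCompactOpenTopology

variable {k A B : Type*} [Field k] [TopologicalSpace k] [AddCommGroup A] [Module k A]
  [UniformSpace A] [AddCommGroup B] [Module k B]

theorem tendsto_apply_zero [TopologicalSpace B] [TopologicalSpace (A →L[k] B)]
    (hco : IsCompactOpenTopology k (A := A) (B := B)) (hB : IsLinearlyTopologized k B) {a : A}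
    (ha : LinearlyCompact k (Submodule.span k {a})) :
    Tendsto (fun f : A →L[k] B => f a) (𝓝 0) (𝓝 0) := by
  rw [hB.tendsto_right_iff]
  intro W hW
  filter_upwards [hco.mem_of_mem (i := (Submodule.span k {a}, W)) ⟨ha, hW⟩] with f hf
  exact hf a (Submodule.mem_span_singleton_self a)

theorem tendsto_of_tendsto_apply [DiscreteTopology A] [TopologicalSpace B]
    [IsTopologicalAddGroup B] [TopologicalSpace (A →L[k] B)]
    [IsTopologicalAddGroup (A →L[k] B)] (hco : IsCompactOpenTopology k (A := A) (B := B))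
    {ι : Type*} {F : Filter ι} {f : ι → A →L[k] B} {g : A →L[k] B}
    (h : ∀ a, Tendsto (fun i => f i a) F (𝓝 (g a))) : Tendsto f F (𝓝 g) := by
  rw [← tendsto_sub_nhds_zero_iff, hco.tendsto_right_iff]
  rintro ⟨K, W⟩ ⟨hK, hW⟩
  have := hK.finiteDimensional
  obtain ⟨s, rfl⟩ := (Submodule.fg_iff_finiteDimensional K).mpr this
  have hs : ∀ x ∈ s, ∀ᶠ i in F, f i x - g x ∈ W := fun x _ =>
    tendsto_sub_nhds_zero_iff.mpr (h x) (hW.mem_nhds W.zero_mem)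
  filter_upwards [(eventually_all_finset s).mpr hs] with i hi
  have hspan : Submodule.span k s ≤ W.comap ((f i - g : A →L[k] B) : A →ₗ[k] B) :=
    Submodule.span_le.mpr hi
  exact fun x hx => hspan hx

theorem completeSpace [DiscreteTopology A] [IsUniformAddGroup A] [UniformSpace B]
    [IsUniformAddGroup B] [ContinuousConstSMul k B] [T2Space B] [CompleteSpace B]
    [UniformSpace (A →L[k] B)] [IsUniformAddGroup (A →L[k] B)]
    (hco : IsCompactOpenTopology k (A := A) (B := B)) (hB : IsLinearlyTopologized k B) :
    CompleteSpace (A →L[k] B) := by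
  have := DiscreteTopology.discreteUniformity (A := A)
  refine ⟨fun {F} hF => ?_⟩
  have := hF.1
  have hCauchy (a : A) : Cauchy (F.map fun f : A →L[k] B => f a) :=
    hF.map <| uniformContinuous_of_tendsto_zero
      (f := AddMonoidHom.mk' (fun f : A →L[k] B => f a) fun _ _ => rfl)
      (hco.tendsto_apply_zero hB (linearlyCompact_of_finiteDimensional _))
  choose b hb using fun a => CompleteSpace.complete (hCauchy a)
  let g : A →ₗ[k] B := linearMapOfTendsto b (fun f : A →L[k] B => (f : A →ₗ[k] B))
    (tendsto_pi_nhds.mpr hb)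
  exact ⟨⟨g, continuous_of_discreteTopology⟩, hco.tendsto_of_tendsto_apply hb⟩

theorem finiteDimensional_quotient [DiscreteTopology A] [TopologicalSpace B]
    [IsTopologicalAddGroup B] [ContinuousConstSMul k B] [TopologicalSpace (A →L[k] B)]
    (hco : IsCompactOpenTopology k (A := A) (B := B))
    (hcodim : ∀ W : Submodule k B, IsOpen (W : Set B) → FiniteDimensional k (B ⧸ W))
    {U : Submodule k (A →L[k] B)} (hU : IsOpen (U : Set (A →L[k] B))) :
    FiniteDimensional k ((A →L[k] B) ⧸ U) := by
  obtain ⟨⟨K, W⟩, ⟨hK, hW⟩, hKW⟩ := hco.mem_iff.mp (hU.mem_nhds U.zero_mem)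
  have := hK.finiteDimensional
  have := hcodim W hW
  let φ : (A →L[k] B) →ₗ[k] K →ₗ[k] B ⧸ W :=
    LinearMap.lcomp k _ K.subtype ∘ₗ LinearMap.llcomp k A B _ W.mkQ ∘ₗ
      ContinuousLinearMap.coeLM k
  have hker : LinearMap.ker φ ≤ U := fun f hf => hKW fun x hx => by
    simpa [φ, Submodule.Quotient.mk_eq_zero] using LinearMap.congr_fun hf ⟨x, hx⟩
  exact (Submodule.CoFG.ker φ).of_le hker

end IsCompactOpenTopology

theorem hom_linearlyCompact_of_discrete_linearlyCompact_general
    {k : Type*} [Field k] [TopologicalSpace k]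
    {A : Type*} [AddCommGroup A] [Module k A] [UniformSpace A]
    [IsUniformAddGroup A]
    {B : Type*} [AddCommGroup B] [Module k B] [UniformSpace B]
    [IsUniformAddGroup B] [ContinuousSMul k B] [T2Space B]
    (hB : IsLinearlyTopologized k B)
    (hAdiscrete : DiscreteTopology A)
    (hBcomplete : CompleteSpace B)
    (hBcompact : ∀ U : Submodule k B, IsOpen (U : Set B) → FiniteDimensional k (B ⧸ U))
    [UniformSpace (A →L[k] B)] [IsUniformAddGroup (A →L[k] B)]
    (hco : IsCompactOpenTopology k (A := A) (B := B)) :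
    CompleteSpace (A →L[k] B) ∧
      ∀ U : Submodule k (A →L[k] B), IsOpen (U : Set (A →L[k] B)) →
        FiniteDimensional k ((A →L[k] B) ⧸ U) :=
  ⟨hco.completeSpace hB, fun _ => hco.finiteDimensional_quotient hBcompact⟩

/-- If `A` is discrete and `B` is linearly compact (complete, with every open linear
subspace of finite codimension), then `Hom(A,B)` with the compact-open topology is
linearly compact: complete, with every open linear subspace of finite codimension. -/
theorem hom_linearlyCompact_of_discrete_linearlyCompact
    {k : Type*} [Field k] [TopologicalSpace k] [DiscreteTopology k]
    {A : Type*} [AddCommGroup A] [Module k A] [UniformSpace A]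
    [IsUniformAddGroup A] [ContinuousSMul k A] [T2Space A]
    {B : Type*} [AddCommGroup B] [Module k B] [UniformSpace B]
    [IsUniformAddGroup B] [ContinuousSMul k B] [T2Space B]
    (hA : IsLinearlyTopologized k A) (hB : IsLinearlyTopologized k B)
    (hAdiscrete : DiscreteTopology A)
    (hBcomplete : CompleteSpace B)
    (hBcompact : ∀ U : Submodule k B, IsOpen (U : Set B) → FiniteDimensional k (B ⧸ U))
    [UniformSpace (A →L[k] B)] [IsUniformAddGroup (A →L[k] B)]
    (hco : IsCompactOpenTopology k (A := A) (B := B)) :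
    CompleteSpace (A →L[k] B) ∧
      ∀ U : Submodule k (A →L[k] B), IsOpen (U : Set (A →L[k] B)) →
        FiniteDimensional k ((A →L[k] B) ⧸ U) :=
  hom_linearlyCompact_of_discrete_linearlyCompact_general hB hAdiscrete hBcomplete hBcompact hco
end

section
/- Let A be a Tate vector space and B any linearly topologized vector space over a discrete field k. Then the set of continuous linear maps A → B of finite rank (i.e., with finite dimensional image) is dense in Hom(A,B) with the compact-open topology. -/
open Filter Topology

/-! Fix `f : A → B` and a basic neighbourhood `f + S_{K,W}` of `f`. The subspace
`J = f⁻¹(W)` is open, so `K/(K ∩ J)` is finite dimensional. Lifting a projection of `A/J` onto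
the image of `K` back to `A` gives a finite-rank `P : A → A` vanishing on `J` with `P x - x ∈ J`
on `K`. Then `f ∘ P` has finite rank, is continuous because it vanishes on an open subspace, and
agrees with `f` on `K` modulo `W`. -/

open Submodule

theorem Submodule.exists_finiteRank_congr_id_mod {k V : Type*} [DivisionRing k]
    [AddCommGroup V] [Module k V] (J K : Submodule k V)
    [FiniteDimensional k (K ⧸ J.comap K.subtype)] :
    ∃ P : V →ₗ[k] V, FiniteDimensional k (LinearMap.range P) ∧ J ≤ LinearMap.ker P ∧
      ∀ x ∈ K, P x - x ∈ J := by
  obtain ⟨σ, hσ⟩ := J.mkQ.exists_rightInverse_of_surjective J.range_mkQ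
  have : FiniteDimensional k (K.map J.mkQ) := by
    rw [← K.range_subtype, ← range_mapQ (J.comap K.subtype) J K.subtype le_rfl]
    infer_instance
  set F := K.map J.mkQ
  obtain ⟨q, hq⟩ := F.subtype.exists_leftInverse_of_injective F.ker_subtype
  refine ⟨σ ∘ₗ F.subtype ∘ₗ q ∘ₗ J.mkQ, ?_, fun x hx => ?_, fun x hx => ?_⟩
  · exact finiteDimensional_of_le (LinearMap.range_comp_le_range _ (σ ∘ₗ F.subtype))
  · simp [(Quotient.mk_eq_zero J).2 hx]
  · rw [← Quotient.eq, ← mkQ_apply, ← mkQ_apply]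
    have hqx : q (J.mkQ x) = ⟨J.mkQ x, mem_map_of_mem hx⟩ :=
      LinearMap.congr_fun hq ⟨J.mkQ x, mem_map_of_mem hx⟩
    rw [LinearMap.comp_apply, ← LinearMap.comp_apply J.mkQ σ, hσ, LinearMap.comp_apply,
      LinearMap.comp_apply, hqx]
    rfl

theorem continuous_of_isOpen_of_forall_mem_eq_zero {A B F : Type*} [AddGroup A]
    [TopologicalSpace A] [IsTopologicalAddGroup A] [AddGroup B] [TopologicalSpace B] [FunLike F A B]
    [AddMonoidHomClass F A B] (f : F) (H : AddSubgroup A) (hH : IsOpen (H : Set A))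
    (hf : ∀ x ∈ H, f x = 0) : Continuous f := by
  refine IsLocallyConstant.continuous <| (IsLocallyConstant.iff_eventually_eq f).2 fun x => ?_
  have hopen : IsOpen {y | y - x ∈ H} := hH.preimage (continuous_sub_right x)
  filter_upwards [hopen.mem_nhds (by simp [H.zero_mem])] with y hy
  simpa using congrArg (· + f x) (hf _ hy)

theorem IsCompactOpenTopology.dense_iff {k A B : Type*} [Field k] [TopologicalSpace k]
    [AddCommGroup A] [Module k A] [UniformSpace A]
    [AddCommGroup B] [Module k B] [TopologicalSpace B] [IsTopologicalAddGroup B]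
    [TopologicalSpace (A →L[k] B)] [IsTopologicalAddGroup (A →L[k] B)]
    (hco : IsCompactOpenTopology k (A := A) (B := B)) {s : Set (A →L[k] B)} :
    Dense s ↔ ∀ (f : A →L[k] B) (K : Submodule k A) (W : Submodule k B),
      LinearlyCompact k K → IsOpen (W : Set B) → ∃ g ∈ s, ∀ x ∈ K, g x - f x ∈ W := by
  have hbasis (f : A →L[k] B) := map_add_left_nhds_zero f ▸ hco.map (f + ·)
  simp only [dense_iff_closure_eq, Set.eq_univ_iff_forall, mem_closure_iff_nhds_basis (hbasis _),
    Set.image_add_left, Set.mem_preimage, Set.mem_ofPred_eq, neg_add_eq_sub,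
    sub_apply, Prod.forall, and_imp]

theorem finiteRank_dense_in_hom_general
    {k : Type*} [Field k] [TopologicalSpace k]
    {A : Type*} [AddCommGroup A] [Module k A] [UniformSpace A]
    [IsUniformAddGroup A]
    {B : Type*} [AddCommGroup B] [Module k B] [TopologicalSpace B]
    [IsTopologicalAddGroup B]
    [TopologicalSpace (A →L[k] B)] [IsTopologicalAddGroup (A →L[k] B)]
    (hco : IsCompactOpenTopology k (A := A) (B := B)) :
    Dense {f : A →L[k] B | FiniteDimensional k ↥(LinearMap.range (f : A →ₗ[k] B))} := by
  refine hco.dense_iff.2 fun f K W hK hW => ?_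
  set J := W.comap (f : A →ₗ[k] B)
  have hJ : IsOpen (J : Set A) := hW.preimage f.continuous
  have := hK.2.2 J hJ
  obtain ⟨P, hPrank, hJP, hPK⟩ := J.exists_finiteRank_congr_id_mod K
  have hP : Continuous P :=
    continuous_of_isOpen_of_forall_mem_eq_zero P J.toAddSubgroup hJ hJP
  refine ⟨f.comp ⟨P, hP⟩, ?_, fun x hx => ?_⟩
  · change FiniteDimensional k (LinearMap.range ((f : A →ₗ[k] B) ∘ₗ P))
    rw [LinearMap.range_comp]
    infer_instance
  · simpa [J] using hPK x hx

/-- If `A` is a Tate vector space, then the continuous linear maps of finite rank are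
dense in `Hom(A,B)` with the compact-open topology. -/
theorem finiteRank_dense_in_hom
    {k : Type*} [Field k] [TopologicalSpace k] [DiscreteTopology k]
    {A : Type*} [AddCommGroup A] [Module k A] [UniformSpace A]
    [IsUniformAddGroup A] [ContinuousSMul k A] [T2Space A]
    {B : Type*} [AddCommGroup B] [Module k B] [TopologicalSpace B]
    [IsTopologicalAddGroup B] [ContinuousSMul k B] [T2Space B]
    (hA : IsLinearlyTopologized k A) (hB : IsLinearlyTopologized k B)
    (hTate : IsTate k A)
    [TopologicalSpace (A →L[k] B)] [IsTopologicalAddGroup (A →L[k] B)]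
    (hco : IsCompactOpenTopology k (A := A) (B := B)) :
    Dense {f : A →L[k] B | FiniteDimensional k ↥(LinearMap.range (f : A →ₗ[k] B))} :=
  finiteRank_dense_in_hom_general hco
end

section
/- Every Tate vector space A over a discrete field k is linearly compactly generated: a subset U ⊆ A is open whenever U ∩ K is open in the subspace topology of K for every linearly compact subspace K ⊆ A. -/
open Filter Topology

/-
Fix a c-lattice `L`. For every point `a`, the subspace `K = L + k a` contains the open subgroup
`L`, so it is open and hence closed, thus complete; it is linearly bounded because its image in
each `A/U` is spanned by the finite-dimensional image of `L` and one more vector. So `K` is an open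
linearly compact subspace through `a`, and openness of `U ∩ K` in `K` makes `U` a neighbourhood
of `a`.
-/

namespace Submodule

variable {R V : Type*} [Ring R] [AddCommGroup V] [Module R V]

noncomputable def quotientComapSubtypeEquivMapMkQ (L U : Submodule R V) :
    (L ⧸ U.comap L.subtype) ≃ₗ[R] L.map U.mkQ :=
  (LinearEquiv.ofInjective ((U.comap L.subtype).mapQ U L.subtype le_rfl)
    (LinearMap.ker_eq_bot.mp (by rw [ker_mapQ, mkQ_map_self]))).trans
    (LinearEquiv.ofEq _ _ (by rw [range_mapQ, range_subtype]))

end Submodule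

section LinearlyBounded

variable {k V : Type*} [Field k] [AddCommGroup V] [Module k V] [TopologicalSpace V]

theorem linearlyBounded_iff_finiteDimensional_map_mkQ {L : Submodule k V} :
    LinearlyBounded k L ↔
      ∀ U : Submodule k V, IsOpen (U : Set V) → FiniteDimensional k (L.map U.mkQ) :=
  forall₂_congr fun U _ => Module.Finite.equiv_iff (L.quotientComapSubtypeEquivMapMkQ U)

theorem LinearlyBounded.of_finiteDimensional (M : Submodule k V) [FiniteDimensional k M] :
    LinearlyBounded k M :=
  fun _ _ => inferInstance

theorem LinearlyBounded.sup {L M : Submodule k V} (hL : LinearlyBounded k L)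
    (hM : LinearlyBounded k M) : LinearlyBounded k (L ⊔ M) := by
  rw [linearlyBounded_iff_finiteDimensional_map_mkQ] at hL hM ⊢
  intro U hU
  have := hL U hU
  have := hM U hU
  rw [Submodule.map_sup]
  infer_instance

end LinearlyBounded

theorem LinearlyBounded.linearlyCompact_of_isOpen {k V : Type*} [Field k] [AddCommGroup V]
    [Module k V] [UniformSpace V] [IsUniformAddGroup V] [CompleteSpace V] {L : Submodule k V}
    (hLb : LinearlyBounded k L) (hLo : IsOpen (L : Set V)) : LinearlyCompact k L :=
  have hLc : IsClosed (L : Set V) := L.toAddSubgroup.isClosed_of_isOpen hLo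
  ⟨hLc, hLc.isComplete, hLb⟩

theorem tate_linearlyCompactlyGenerated_general
    {k : Type*} [Field k]
    {A : Type*} [AddCommGroup A] [Module k A] [UniformSpace A]
    [IsUniformAddGroup A]
    (hTate : IsTate k A) :
    ∀ U : Set A,
      (∀ K : Submodule k A, LinearlyCompact k K →
        IsOpen (Subtype.val ⁻¹' U : Set ↥K)) →
      IsOpen U := by
  intro U hU
  obtain ⟨_, L, hLo, -, -, hLb⟩ := hTate
  refine isOpen_iff_forall_mem_open.mpr fun a ha => ?_
  let K := L ⊔ k ∙ a
  have hKo : IsOpen (K : Set A) := Submodule.isOpen_mono le_sup_left hLo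
  have hK : LinearlyCompact k K :=
    (hLb.sup (.of_finiteDimensional _)).linearlyCompact_of_isOpen hKo
  have haK : a ∈ K := Submodule.mem_sup_right (Submodule.mem_span_singleton_self a)
  exact ⟨_, Set.image_preimage_subset _ _, hKo.isOpenMap_subtype_val _ (hU K hK),
    ⟨a, haK⟩, ha, rfl⟩

/-- Every Tate vector space is linearly compactly generated: a subset is open as soon
as its intersection with every linearly compact subspace `K` is open in the subspace
topology of `K`. -/
theorem tate_linearlyCompactlyGenerated
    {k : Type*} [Field k] [TopologicalSpace k] [DiscreteTopology k]
    {A : Type*} [AddCommGroup A] [Module k A] [UniformSpace A]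
    [IsUniformAddGroup A] [ContinuousSMul k A] [T2Space A]
    (hA : IsLinearlyTopologized k A) (hTate : IsTate k A) :
    ∀ U : Set A,
      (∀ K : Submodule k A, LinearlyCompact k K →
        IsOpen (Subtype.val ⁻¹' U : Set ↥K)) →
      IsOpen U :=
  tate_linearlyCompactlyGenerated_general hTate
end

section
/- Let A and B be linearly topologized vector spaces over a discrete field k. If A is linearly compactly generated and B is complete, then Hom(A,B) with the compact-open topology is complete. In particular, the topological dual A* of a linearly compactly generated space A is complete. -/
open Filter Topology

/-- A linearly topologized vector space is linearly compactly generated if a subset is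
open whenever its intersection with every linearly compact subspace `K` is open in the
subspace topology of `K`. -/
def LinearlyCompactlyGenerated (k V : Type*) [Field k] [AddCommGroup V] [Module k V]
    [UniformSpace V] : Prop :=
  ∀ U : Set V,
    (∀ K : Submodule k V, LinearlyCompact k K →
      IsOpen (Subtype.val ⁻¹' U : Set ↥K)) →
    IsOpen U

open Uniformity

/-!
Points span linearly compact subspaces, so evaluation at a point is uniformly continuous and a
Cauchy filter `F` on `Hom(A, B)` has a pointwise limit `g`, which is linear. Since open subspaces
of `B` are closed, the Cauchy condition for the basic entourages `S_{K,W}` passes to the limit: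
`F` converges to `g` uniformly on every linearly compact `K`. Thus on each such `K` the map `g`
agrees modulo `W` with a continuous map, so `g⁻¹ W` meets `K` in an open set; as `A` is linearly
compactly generated, `g` is continuous, and uniform convergence on linearly compact subspaces is
convergence in `Hom(A, B)`.
-/

section LinearTopology

variable {k V : Type*} [Field k] [AddCommGroup V] [Module k V]

theorem IsLinearlyTopologized.exists_isOpen_disjoint_span_singleton [TopologicalSpace V]
    [T1Space V] (hV : IsLinearlyTopologized k V) (a : V) :
    ∃ U : Submodule k V, IsOpen (U : Set V) ∧ Disjoint U (k ∙ a) := by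
  simp_rw [Submodule.disjoint_span_singleton]
  by_cases ha : a = 0
  · obtain ⟨U, hU⟩ := hV.ex_mem
    exact ⟨U, hU, fun _ => ha⟩
  · obtain ⟨U, hU, hUa⟩ := hV.mem_iff.1 (isOpen_compl_singleton.mem_nhds (Ne.symm ha))
    exact ⟨U, hU, fun h => absurd rfl (hUa h)⟩

theorem Submodule.isComplete_of_disjoint_isOpen [UniformSpace V] [IsUniformAddGroup V]
    {S U : Submodule k V} (hU : IsOpen (U : Set V)) (hUS : Disjoint U S) :
    IsComplete (S : Set V) := by
  have : DiscreteTopology S := by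
    refine discreteTopology_iff_isOpen_singleton_zero.2 (isOpen_induced_iff.2 ⟨U, hU, ?_⟩)
    ext ⟨x, hx⟩
    simp only [Set.mem_preimage, SetLike.mem_coe, Set.mem_singleton_iff, Submodule.mk_eq_zero]
    exact ⟨fun hxU => Submodule.disjoint_def.1 hUS x hxU hx, fun h => h ▸ U.zero_mem⟩
  -- a discrete uniform group is locally compact, hence complete
  have : IsUniformAddGroup S.toAddSubgroup := inferInstance
  have : CompleteSpace S := IsRightUniformAddGroup.completeSpace_of_weaklyLocallyCompactSpace
  exact completeSpace_coe_iff_isComplete.1 this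

theorem IsLinearlyTopologized.linearlyCompact_span_singleton [UniformSpace V]
    [IsUniformAddGroup V] [T1Space V] (hV : IsLinearlyTopologized k V) (a : V) :
    LinearlyCompact k (k ∙ a) := by
  obtain ⟨U, hU, hUa⟩ := hV.exists_isOpen_disjoint_span_singleton a
  have hcomplete := Submodule.isComplete_of_disjoint_isOpen hU hUa
  exact ⟨hcomplete.isClosed, hcomplete, fun _ _ => inferInstance⟩

theorem IsLinearlyTopologized.hasBasis_uniformity [UniformSpace V] [IsUniformAddGroup V]
    (hV : IsLinearlyTopologized k V) :
    (𝓤 V).HasBasis (fun U : Submodule k V => IsOpen (U : Set V))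
      (fun U => {p : V × V | p.2 - p.1 ∈ U}) := by
  rw [uniformity_eq_comap_nhds_zero]
  exact hV.comap _

end LinearTopology

section CompactOpen

variable {k A B : Type*} [Field k] [TopologicalSpace k]
  [AddCommGroup A] [Module k A] [UniformSpace A]
  [AddCommGroup B] [Module k B] [UniformSpace B] [IsUniformAddGroup B]
  [UniformSpace (A →L[k] B)] [IsUniformAddGroup (A →L[k] B)]

theorem IsCompactOpenTopology.hasBasis_uniformity
    (hco : IsCompactOpenTopology k (A := A) (B := B)) :
    (𝓤 (A →L[k] B)).HasBasis
      (fun p : Submodule k A × Submodule k B => LinearlyCompact k p.1 ∧ IsOpen (p.2 : Set B))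
      (fun p => {q | ∀ x ∈ p.1, q.2 x - q.1 x ∈ p.2}) := by
  rw [uniformity_eq_comap_nhds_zero]
  exact hco.comap _

theorem IsCompactOpenTopology.uniformContinuous_apply [IsUniformAddGroup A] [T1Space A]
    (hA : IsLinearlyTopologized k A) (hB : IsLinearlyTopologized k B)
    (hco : IsCompactOpenTopology k (A := A) (B := B)) (a : A) :
    UniformContinuous fun f : A →L[k] B => f a :=
  (hco.hasBasis_uniformity.uniformContinuous_iff hB.hasBasis_uniformity).2 fun W hW =>
    ⟨(k ∙ a, W), ⟨hA.linearlyCompact_span_singleton a, hW⟩,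
      fun _ _ hp => hp a (Submodule.mem_span_singleton_self a)⟩

theorem IsCompactOpenTopology.eventually_forall_sub_mem
    (hco : IsCompactOpenTopology k (A := A) (B := B)) {F : Filter (A →L[k] B)} (hF : Cauchy F)
    {g : A → B} (hg : ∀ a, Tendsto (fun f : A →L[k] B => f a) F (𝓝 (g a)))
    {K : Submodule k A} {W : Submodule k B} (hK : LinearlyCompact k K)
    (hW : IsOpen (W : Set B)) :
    ∀ᶠ f in F, ∀ x ∈ K, f x - g x ∈ W := by
  have := hF.1
  obtain ⟨T, hT, hTT⟩ := (hco.hasBasis_uniformity.cauchy_iff.1 hF).2 (K, W) ⟨hK, hW⟩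
  filter_upwards [hT] with f hf x hx
  have hclosed : IsClosed {b | f x - b ∈ W} :=
    (W.toAddSubgroup.isClosed_of_isOpen hW).preimage (continuous_const.sub continuous_id)
  exact hclosed.mem_of_tendsto (hg x) (mem_of_superset hT fun f' hf' => hTT f' hf' f hf x hx)

end CompactOpen

theorem LinearlyCompactlyGenerated.continuous_of_forall_exists_sub_mem {k A B : Type*} [Field k]
    [AddCommGroup A] [Module k A] [UniformSpace A] [IsUniformAddGroup A]
    [AddCommGroup B] [Module k B] [TopologicalSpace B] [IsTopologicalAddGroup B]
    (hA : LinearlyCompactlyGenerated k A) (hB : IsLinearlyTopologized k B) (g : A →ₗ[k] B)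
    (h : ∀ (K : Submodule k A) (W : Submodule k B), LinearlyCompact k K → IsOpen (W : Set B) →
      ∃ f : A →L[k] B, ∀ x ∈ K, f x - g x ∈ W) :
    Continuous g := by
  refine continuous_of_tendsto_nhds_zero g (hB.tendsto_right_iff.2 fun W hW => ?_)
  refine (hA _ fun K hK => ?_).mem_nhds (by simp)
  obtain ⟨f, hf⟩ := h K W hK hW
  convert (hW.preimage f.continuous).preimage continuous_subtype_val using 1
  ext ⟨x, hx⟩
  exact ⟨fun hg => by simpa using W.add_mem (hf x hx) hg,
    fun hf' => by simpa using W.sub_mem hf' (hf x hx)⟩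

theorem hom_complete_of_compactlyGenerated_complete_general
    {k : Type*} [Field k] [TopologicalSpace k]
    {A : Type*} [AddCommGroup A] [Module k A] [UniformSpace A]
    [IsUniformAddGroup A] [T2Space A]
    {B : Type*} [AddCommGroup B] [Module k B] [UniformSpace B]
    [IsUniformAddGroup B] [ContinuousSMul k B] [T2Space B]
    (hA : IsLinearlyTopologized k A) (hB : IsLinearlyTopologized k B)
    (hAgen : LinearlyCompactlyGenerated k A)
    (hBcomplete : CompleteSpace B)
    [UniformSpace (A →L[k] B)] [IsUniformAddGroup (A →L[k] B)]
    (hco : IsCompactOpenTopology k (A := A) (B := B)) :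
    CompleteSpace (A →L[k] B) := by
  refine ⟨fun {F} hF => ?_⟩
  have := hF.1
  choose g hg using fun a => CompleteSpace.complete (hF.map (hco.uniformContinuous_apply hA hB a))
  let gL : A →ₗ[k] B :=
    linearMapOfTendsto g (fun f : A →L[k] B => (f : A →ₗ[k] B)) (tendsto_pi_nhds.2 hg)
  have hunif (K : Submodule k A) (W : Submodule k B) (hK : LinearlyCompact k K)
      (hW : IsOpen (W : Set B)) : ∀ᶠ f in F, ∀ x ∈ K, f x - g x ∈ W :=
    hco.eventually_forall_sub_mem hF hg hK hW
  have hcont : Continuous gL :=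
    hAgen.continuous_of_forall_exists_sub_mem hB gL fun K W hK hW => (hunif K W hK hW).exists
  refine ⟨⟨gL, hcont⟩, ?_⟩
  exact tendsto_sub_nhds_zero_iff.1 <|
    hco.tendsto_right_iff.2 fun ⟨K, W⟩ ⟨hK, hW⟩ => hunif K W hK hW

/-- If `A` is linearly compactly generated and `B` is complete, then `Hom(A,B)` with
the compact-open topology is complete.  (In particular, taking `B = k`, the topological
dual of a linearly compactly generated space is complete.) -/
theorem hom_complete_of_compactlyGenerated_complete
    {k : Type*} [Field k] [TopologicalSpace k] [DiscreteTopology k]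
    {A : Type*} [AddCommGroup A] [Module k A] [UniformSpace A]
    [IsUniformAddGroup A] [ContinuousSMul k A] [T2Space A]
    {B : Type*} [AddCommGroup B] [Module k B] [UniformSpace B]
    [IsUniformAddGroup B] [ContinuousSMul k B] [T2Space B]
    (hA : IsLinearlyTopologized k A) (hB : IsLinearlyTopologized k B)
    (hAgen : LinearlyCompactlyGenerated k A)
    (hBcomplete : CompleteSpace B)
    [UniformSpace (A →L[k] B)] [IsUniformAddGroup (A →L[k] B)]
    (hco : IsCompactOpenTopology k (A := A) (B := B)) :
    CompleteSpace (A →L[k] B) :=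
  hom_complete_of_compactlyGenerated_complete_general hA hB hAgen hBcomplete hco
end

section
/- For each n ∈ ℕ let W_n be a Tate vector space over a discrete field k, and for i ≤ j let g_{ij} : W_j → W_i be continuous linear maps with g_{ii} = id and g_{ij} ∘ g_{jk} = g_{ik} for i ≤ j ≤ k, such that each g_{ij} is proper, i.e., the preimage under g_{ij} of every linearly compact subspace of W_i is a linearly compact subspace of W_j. Then the inverse limit lim W_n = {x ∈ ∏_n W_n : g_{ij}(x_j) = x_i for all i ≤ j}, equipped with the subspace topology induced from the product topology on ∏_n W_n, is a Tate vector space. -/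
open Filter Topology

/-- The inverse limit `lim Wₙ = {x ∈ ∏ₙ Wₙ : g_{ij}(x_j) = x_i for i ≤ j}` of an inverse
system of topological vector spaces, as a submodule of the product. -/
def invLimit {k : Type*} [Field k] {W : ℕ → Type*}
    [∀ n, AddCommGroup (W n)] [∀ n, Module k (W n)] [∀ n, TopologicalSpace (W n)]
    (g : ∀ i j : ℕ, i ≤ j → (W j →L[k] W i)) : Submodule k (∀ n, W n) where
  carrier := {x | ∀ (i j : ℕ) (h : i ≤ j), g i j h (x j) = x i}
  add_mem' := fun hx hy i j h => by simp [hx i j h, hy i j h]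
  zero_mem' := fun i j h => by simp
  smul_mem' := fun c x hx i j h => by simp [hx i j h]

section FiniteQuotient

variable {k V W : Type*} [Field k] [AddCommGroup V] [Module k V] [AddCommGroup W] [Module k W]

theorem finiteDimensional_quotient_of_ker_le {T : Type*} [AddCommGroup T] [Module k T]
    [FiniteDimensional k T] {p : Submodule k V} (φ : V →ₗ[k] T) (hker : LinearMap.ker φ ≤ p) :
    FiniteDimensional k (V ⧸ p) :=
  have : FiniteDimensional k (V ⧸ LinearMap.ker φ) := .equiv φ.quotKerEquivRange.symm
  .of_surjective _ (Submodule.factor_surjective hker)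

theorem finiteDimensional_quotient_of_le_comap (f : V →ₗ[k] W) {L U : Submodule k V}
    {K Q : Submodule k W} [FiniteDimensional k (K ⧸ Q.comap K.subtype)]
    (hLK : L ≤ K.comap f) (hQU : Q.comap f ≤ U) :
    FiniteDimensional k (L ⧸ U.comap L.subtype) := by
  refine finiteDimensional_quotient_of_ker_le
    ((Q.comap K.subtype).mkQ ∘ₗ f.restrict (q := K) hLK) fun x hx => ?_
  rw [LinearMap.mem_ker, LinearMap.comp_apply, Submodule.mkQ_apply,
    Submodule.Quotient.mk_eq_zero] at hx
  exact hQU hx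

end FiniteQuotient

section InverseLimit

variable {k : Type*} [Field k] {W : ℕ → Type*} [∀ n, AddCommGroup (W n)] [∀ n, Module k (W n)]
  [∀ n, TopologicalSpace (W n)] (g : ∀ i j : ℕ, i ≤ j → (W j →L[k] W i))

def invLimitProj (n : ℕ) : invLimit g →L[k] W n :=
  (ContinuousLinearMap.proj n).comp (invLimit g).subtypeL

theorem map_invLimitProj {i j : ℕ} (h : i ≤ j) (x : invLimit g) :
    g i j h (invLimitProj g j x) = invLimitProj g i x :=
  x.2 i j h

theorem isClosed_invLimit [∀ n, T2Space (W n)] :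
    IsClosed (invLimit g : Set (∀ n, W n)) := by
  have : (invLimit g : Set (∀ n, W n)) =
      ⋂ (i) (j) (h : i ≤ j), {x | g i j h (x j) = x i} := by
    ext x
    simp only [Set.mem_iInter]
    rfl
  rw [this]
  exact isClosed_iInter fun i => isClosed_iInter fun j => isClosed_iInter fun h =>
    isClosed_eq ((g i j h).continuous.comp (continuous_apply j)) (continuous_apply i)

theorem nhds_invLimit (x : invLimit g) :
    𝓝 x = ⨅ n, comap (invLimitProj g n) (𝓝 (invLimitProj g n x)) := by
  rw [nhds_subtype, nhds_pi, Filter.pi, comap_iInf]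
  simp only [comap_comap]
  rfl

theorem antitone_comap_invLimitProj (x : invLimit g) :
    Antitone fun n => comap (invLimitProj g n) (𝓝 (invLimitProj g n x)) := by
  intro i j hij
  have hproj : invLimitProj g i = g i j hij ∘ invLimitProj g j :=
    funext fun y => (map_invLimitProj g hij y).symm
  simp only [hproj, ← comap_comap]
  exact comap_mono ((g i j hij).continuous.tendsto _).le_comap

theorem exists_mem_comap_invLimitProj_of_mem_nhds {x : invLimit g} {s : Set (invLimit g)}
    (hs : s ∈ 𝓝 x) :
    ∃ n, s ∈ comap (invLimitProj g n) (𝓝 (invLimitProj g n x)) := by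
  rw [nhds_invLimit, mem_iInf_of_directed (antitone_comap_invLimitProj g x).directed_ge] at hs
  exact hs

theorem exists_isOpen_comap_invLimitProj_le (hlin : ∀ n, IsLinearlyTopologized k (W n))
    {U : Submodule k (invLimit g)} (hU : IsOpen (U : Set (invLimit g))) :
    ∃ n, ∃ Q : Submodule k (W n), IsOpen (Q : Set (W n)) ∧
      Q.comap (invLimitProj g n : invLimit g →ₗ[k] W n) ≤ U := by
  obtain ⟨n, t, ht, htU⟩ := exists_mem_comap_invLimitProj_of_mem_nhds g (hU.mem_nhds U.zero_mem)
  rw [map_zero] at ht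
  obtain ⟨Q, hQ, hQt⟩ := (hlin n).mem_iff.mp ht
  exact ⟨n, Q, hQ, fun y hy => htU (hQt hy)⟩

end InverseLimit

theorem invLimit_tate_of_proper_general
    {k : Type*} [Field k]
    {W : ℕ → Type*} [∀ n, AddCommGroup (W n)] [∀ n, Module k (W n)]
    [∀ n, UniformSpace (W n)]
    [∀ n, T2Space (W n)]
    (hlin : ∀ n, IsLinearlyTopologized k (W n))
    (hTate : ∀ n, IsTate k (W n))
    (g : ∀ i j : ℕ, i ≤ j → (W j →L[k] W i))
    (hproper : ∀ (i j : ℕ) (h : i ≤ j) (K : Submodule k (W i)),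
      LinearlyCompact k K → LinearlyCompact k (K.comap ((g i j h) : W j →ₗ[k] W i))) :
    IsTate k ↥(invLimit g) := by
  have : ∀ n, CompleteSpace (W n) := fun n => (hTate n).1
  have hcomplete : CompleteSpace (invLimit g) :=
    (isClosed_invLimit g).isComplete.completeSpace_coe
  obtain ⟨-, L₀, hL₀open, hL₀⟩ := hTate 0
  have hLclosed := hL₀.1.preimage (invLimitProj g 0).continuous
  refine ⟨hcomplete, L₀.comap (invLimitProj g 0 : invLimit g →ₗ[k] W 0),
    hL₀open.preimage (invLimitProj g 0).continuous, hLclosed, hLclosed.isComplete,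
    fun U hU => ?_⟩
  obtain ⟨N, Q, hQ, hQU⟩ := exists_isOpen_comap_invLimitProj_le g hlin hU
  set K := L₀.comap (g 0 N N.zero_le : W N →ₗ[k] W 0)
  have : FiniteDimensional k (K ⧸ Q.comap K.subtype) := (hproper 0 N N.zero_le L₀ hL₀).2.2 Q hQ
  refine finiteDimensional_quotient_of_le_comap _ (K := K) (fun x hx => ?_) hQU
  change g 0 N _ (invLimitProj g N x) ∈ L₀
  rwa [map_invLimitProj]

/-- The inverse limit of a countably indexed inverse system of Tate vector spaces with
proper transition maps, with the subspace topology induced from the product topology,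
is a Tate vector space. -/
theorem invLimit_tate_of_proper
    {k : Type*} [Field k] [TopologicalSpace k] [DiscreteTopology k]
    {W : ℕ → Type*} [∀ n, AddCommGroup (W n)] [∀ n, Module k (W n)]
    [∀ n, UniformSpace (W n)] [∀ n, IsUniformAddGroup (W n)]
    [∀ n, ContinuousSMul k (W n)] [∀ n, T2Space (W n)]
    (hlin : ∀ n, IsLinearlyTopologized k (W n))
    (hTate : ∀ n, IsTate k (W n))
    (g : ∀ i j : ℕ, i ≤ j → (W j →L[k] W i))
    (hg_id : ∀ i, g i i le_rfl = ContinuousLinearMap.id k (W i))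
    (hg_comp : ∀ (i j l : ℕ) (hij : i ≤ j) (hjl : j ≤ l) (x : W l),
      g i j hij (g j l hjl x) = g i l (hij.trans hjl) x)
    (hproper : ∀ (i j : ℕ) (h : i ≤ j) (K : Submodule k (W i)),
      LinearlyCompact k K → LinearlyCompact k (K.comap ((g i j h) : W j →ₗ[k] W i))) :
    IsTate k ↥(invLimit g) :=
  invLimit_tate_of_proper_general hlin hTate g hproper
end

section
/- Let B be a complete linearly topologized vector space over a discrete field k which admits a countable neighborhood basis of 0 consisting of open linear subspaces, and let A ⊆ B be a closed linear subspace. Then the inclusion A → B admits a continuous linear retraction: there exists a continuous linear map π : B → A with π(a) = a for all a ∈ A. Consequently A has a topological complement: a closed linear subspace S ⊆ B with A ∩ S = {0} and A + S = B such that the addition map A × S → B is a topological isomorphism. -/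
/-!
Fix a decreasing basis `V₀ ⊇ V₁ ⊇ ⋯` of open subspaces at `0`. Linear algebra alone produces
linear maps `fₙ : B → A` that vanish on `Vₙ`, agree with the identity on `A` modulo `Vₙ`, and
satisfy `fₙ₊₁ ≡ fₙ` modulo `Vₙ`. By completeness they converge pointwise to a linear map
`π : B → A` fixing `A`. Each `Vₙ` is closed, being an open subgroup, and `fₘ(Vₙ) ⊆ Vₙ` for
`m ≥ n`, so `π(Vₙ) ⊆ Vₙ` and `π` is continuous. The kernel of a continuous retraction is a
topological complement.
-/

open Filter Topology

theorem exists_ge_codisjoint_inf_le {α : Type*} [Lattice α] [BoundedOrder α]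
    [IsModularLattice α] [ComplementedLattice α] (a v : α) :
    ∃ y, v ≤ y ∧ Codisjoint a y ∧ a ⊓ y ≤ v := by
  obtain ⟨r, hr⟩ := exists_isCompl (a ⊔ v)
  refine ⟨v ⊔ r, le_sup_left, ?_, ?_⟩
  · rw [codisjoint_iff, ← sup_assoc]
    exact hr.sup_eq_top
  · calc a ⊓ (v ⊔ r) ≤ (a ⊔ v) ⊓ (v ⊔ r) := inf_le_inf_right _ le_sup_left
      _ = v := by
        rw [inf_comm, sup_inf_assoc_of_le r le_sup_right, hr.symm.inf_eq_bot, sup_bot_eq]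

theorem tendsto_of_sub_mem {G : Type*} [AddGroup G] [TopologicalSpace G] [IsTopologicalAddGroup G]
    {s : ℕ → Set G} (hs : (𝓝 0).HasAntitoneBasis s) {u : ℕ → G} {b : G}
    (hu : ∀ n, u n - b ∈ s n) : Tendsto u atTop (𝓝 b) := by
  rw [← tendsto_sub_nhds_zero_iff, hs.toHasBasis.tendsto_right_iff]
  exact fun i _ => eventually_atTop.2 ⟨i, fun n hn => hs.antitone hn (hu n)⟩

theorem continuous_of_mapsTo_nhds_basis {G F ι : Type*} [AddGroup G] [TopologicalSpace G]
    [IsTopologicalAddGroup G] [FunLike F G G] [AddMonoidHomClass F G G] {p : ι → Prop}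
    {s : ι → Set G} (hs : (𝓝 0).HasBasis p s) (g : F)
    (hg : ∀ i, p i → Set.MapsTo g (s i) (s i)) : Continuous g :=
  continuous_of_tendsto_nhds_zero g <| (hs.tendsto_iff hs).2 fun i hi => ⟨i, hi, hg i hi⟩

section Telescoping

variable {k B : Type*} [Ring k] [AddCommGroup B] [Module k B] {V : ℕ → Submodule k B}
  {u : ℕ → B}

theorem sub_mem_of_succ_sub_mem (hV : Antitone V) (hu : ∀ n, u (n + 1) - u n ∈ V n)
    {m n : ℕ} (hmn : m ≤ n) : u n - u m ∈ V m := by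
  induction n, hmn using Nat.le_induction with
  | base => simp
  | succ n hmn ih => simpa using (V m).add_mem (hV hmn (hu n)) ih

theorem cauchySeq_of_succ_sub_mem [UniformSpace B] [IsUniformAddGroup B]
    (hV : (𝓝 (0 : B)).HasAntitoneBasis fun n => (V n : Set B))
    (hu : ∀ n, u (n + 1) - u n ∈ V n) : CauchySeq u := by
  have hunif : (uniformity B).HasBasis (fun _ => True)
      fun n => {p : B × B | p.2 - p.1 ∈ V n} := by
    rw [uniformity_eq_comap_nhds_zero B]
    exact hV.toHasBasis.comap _
  refine hunif.cauchySeq_iff'.2 fun n _ => ⟨n, fun m hm => ?_⟩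
  simpa using (V n).neg_mem (sub_mem_of_succ_sub_mem (fun _ _ h => hV.antitone h) hu hm)

end Telescoping

section RetractionModulo

variable {k B : Type*} [DivisionRing k] [AddCommGroup B] [Module k B]

structure IsRetractionModulo (A V : Submodule k B) (f : B →ₗ[k] A) : Prop where
  sub_mem : ∀ a : A, (f a : B) - a ∈ V
  le_ker : V ≤ LinearMap.ker f

theorem IsRetractionModulo.exists_refine {A V W : Submodule k B} {f : B →ₗ[k] A}
    (hf : IsRetractionModulo A W f) (hVW : V ≤ W) :
    ∃ g : B →ₗ[k] A, IsRetractionModulo A V g ∧ ∀ x, (g x : B) - f x ∈ W := by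
  obtain ⟨Y, hVY, hAY, hAYV⟩ := exists_ge_codisjoint_inf_le A V
  obtain ⟨T, hTA, hTY⟩ := hAY.exists_isCompl
  -- `B = T ⊕ Y` with `T ≤ A` and `A ∩ Y ≤ V`; `g` is the identity on `T` and `f` on `Y`.
  let g := LinearMap.ofIsCompl hTY (Submodule.inclusion hTA) (f ∘ₗ Y.subtype)
  have hg : ∀ (t : T) (y : Y), g (t + y) = Submodule.inclusion hTA t + f y := by
    intro t y
    simp [g]
  have hfV : ∀ v ∈ V, f v = 0 := fun v hv => hf.le_ker (hVW hv)
  refine ⟨g, ⟨fun a => ?_, fun v hv => ?_⟩, fun x => ?_⟩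
  · obtain ⟨t, y, hty, -⟩ := Submodule.existsUnique_add_of_isCompl hTY (a : B)
    have hyV : (y : B) ∈ V := by
      refine hAYV ⟨?_, y.2⟩
      rw [eq_sub_of_add_eq' hty]
      exact A.sub_mem a.2 (hTA t.2)
    rw [← hty, hg, hfV y hyV]
    simpa using V.neg_mem hyV
  · rw [LinearMap.mem_ker, ← hfV v hv]
    exact LinearMap.ofIsCompl_apply_right hTY (⟨v, hVY hv⟩ : Y)
  · obtain ⟨t, y, rfl, -⟩ := Submodule.existsUnique_add_of_isCompl hTY x
    rw [hg, map_add]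
    simpa using W.neg_mem (hf.sub_mem ⟨t, hTA t.2⟩)

theorem exists_seq_isRetractionModulo (A : Submodule k B) {V : ℕ → Submodule k B}
    (hV : Antitone V) :
    ∃ f : ℕ → B →ₗ[k] A, (∀ n, IsRetractionModulo A (V n) (f n)) ∧
      ∀ n x, (f (n + 1) x : B) - f n x ∈ V n := by
  have htop : IsRetractionModulo A ⊤ 0 := ⟨fun _ => Submodule.mem_top, by simp⟩
  obtain ⟨f₀, hf₀, -⟩ := htop.exists_refine le_top
  choose next hnext hsucc using fun n (f : {f // IsRetractionModulo A (V n) f}) =>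
    f.2.exists_refine (hV n.le_succ)
  let F : ∀ n, {f // IsRetractionModulo A (V n) f} := fun n =>
    Nat.rec ⟨f₀, hf₀⟩ (fun n f => ⟨next n f, hnext n f⟩) n
  exact ⟨fun n => (F n).1, fun n => (F n).2, fun n => hsucc n (F n)⟩

end RetractionModulo

theorem Submodule.closedComplemented_of_isClosed {k B : Type*} [Field k] [AddCommGroup B]
    [Module k B] [UniformSpace B] [IsUniformAddGroup B] [CompleteSpace B] [T2Space B]
    [ContinuousConstSMul k B] (hB : IsLinearlyTopologized k B)
    [(𝓝 (0 : B)).IsCountablyGenerated] {A : Submodule k B} (hA : IsClosed (A : Set B)) :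
    A.ClosedComplemented := by
  obtain ⟨V, hVopen, hV⟩ := hB.exists_antitone_subbasis
  have hVanti : Antitone V := fun _ _ h => hV.antitone h
  obtain ⟨f, hf, hfsucc⟩ := exists_seq_isRetractionModulo A hVanti
  have hlim : ∀ x, ∃ b, Tendsto (fun n => (f n x : B)) atTop (𝓝 b) := fun x =>
    cauchySeq_tendsto_of_complete (cauchySeq_of_succ_sub_mem hV (hfsucc · x))
  choose π hπ using hlim
  let πL : B →ₗ[k] B := linearMapOfTendsto π (fun n => A.subtype ∘ₗ f n) (tendsto_pi_nhds.2 hπ)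
  have hπA : ∀ x, π x ∈ A := fun x => hA.mem_of_tendsto (hπ x) (.of_forall fun n => (f n x).2)
  have hπV : ∀ n, Set.MapsTo π (V n) (V n) := fun n x hx =>
    (AddSubgroup.isClosed_of_isOpen (V n).toAddSubgroup (hVopen n)).mem_of_tendsto (hπ x) <|
      eventually_atTop.2 ⟨n, fun m hm => by
        simpa [LinearMap.mem_ker.mp ((hf n).le_ker hx)] using
          sub_mem_of_succ_sub_mem hVanti (u := fun n => (f n x : B)) (hfsucc · x) hm⟩
  have hcont : Continuous πL := continuous_of_mapsTo_nhds_basis hV.toHasBasis πL fun n _ => hπV n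
  refine ⟨⟨πL.codRestrict A hπA, hcont.subtype_mk hπA⟩, fun a => Subtype.ext ?_⟩
  exact tendsto_nhds_unique (hπ a) (tendsto_of_sub_mem hV fun n => (hf n).sub_mem a)

theorem closed_subspace_retraction_and_complement_general
    {k : Type*} [Field k] [TopologicalSpace k]
    {B : Type*} [AddCommGroup B] [Module k B] [UniformSpace B]
    [IsUniformAddGroup B] [ContinuousSMul k B] [T2Space B]
    (hB : IsLinearlyTopologized k B)
    (hcomplete : CompleteSpace B)
    (hcount : ∃ U : ℕ → Submodule k B, (∀ n, IsOpen ((U n) : Set B)) ∧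
      (nhds (0 : B)).HasBasis (fun _ : ℕ => True) (fun n => ((U n) : Set B)))
    (A : Submodule k B) (hA : IsClosed (A : Set B)) :
    (∃ π : B →L[k] ↥A, ∀ a : ↥A, π (a : B) = a) ∧
    (∃ S : Submodule k B, IsClosed (S : Set B) ∧ A ⊓ S = ⊥ ∧ A ⊔ S = ⊤ ∧
      Function.Bijective (fun p : ↥A × ↥S => (p.1 : B) + (p.2 : B)) ∧
      Continuous (fun p : ↥A × ↥S => (p.1 : B) + (p.2 : B)) ∧
      IsOpenMap (fun p : ↥A × ↥S => (p.1 : B) + (p.2 : B))) := by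
  have : (𝓝 (0 : B)).IsCountablyGenerated :=
    let ⟨_, _, hU⟩ := hcount
    hU.isCountablyGenerated
  have hAc : A.ClosedComplemented := Submodule.closedComplemented_of_isClosed hB hA
  obtain ⟨S, hS⟩ := hAc.exists_isTopCompl
  have hhomeo :=
    (Submodule.IsCompl.isTopCompl_iff_isHomeomorph_prodEquivOfIsCompl hS.isCompl).mp hS
  exact ⟨hAc, S, hS.isClosed', hS.isCompl.inf_eq_bot, hS.isCompl.sup_eq_top, hhomeo.bijective,
    hhomeo.continuous, hhomeo.isOpenMap⟩

/-- If `B` is a complete linearly topologized vector space over a discrete field with a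
countable neighborhood basis of `0` consisting of open linear subspaces, then every
closed linear subspace `A ⊆ B` admits a continuous linear retraction `π : B → A`, and
consequently a topological complement: a closed linear subspace `S` with `A ∩ S = 0`
and `A + S = B` such that the addition map `A × S → B` is a topological isomorphism. -/
theorem closed_subspace_retraction_and_complement
    {k : Type*} [Field k] [TopologicalSpace k] [DiscreteTopology k]
    {B : Type*} [AddCommGroup B] [Module k B] [UniformSpace B]
    [IsUniformAddGroup B] [ContinuousSMul k B] [T2Space B]
    (hB : IsLinearlyTopologized k B)
    (hcomplete : CompleteSpace B)
    (hcount : ∃ U : ℕ → Submodule k B, (∀ n, IsOpen ((U n) : Set B)) ∧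
      (nhds (0 : B)).HasBasis (fun _ : ℕ => True) (fun n => ((U n) : Set B)))
    (A : Submodule k B) (hA : IsClosed (A : Set B)) :
    (∃ π : B →L[k] ↥A, ∀ a : ↥A, π (a : B) = a) ∧
    (∃ S : Submodule k B, IsClosed (S : Set B) ∧ A ⊓ S = ⊥ ∧ A ⊔ S = ⊤ ∧
      Function.Bijective (fun p : ↥A × ↥S => (p.1 : B) + (p.2 : B)) ∧
      Continuous (fun p : ↥A × ↥S => (p.1 : B) + (p.2 : B)) ∧
      IsOpenMap (fun p : ↥A × ↥S => (p.1 : B) + (p.2 : B))) :=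
  closed_subspace_retraction_and_complement_general hB hcomplete hcount A hA
end

section
/- Let k be a discrete field, B a linearly topologized vector space over k, and A ⊆ B a linear subspace endowed with the induced topology. Then every continuous linear map f : A → k extends to a continuous linear map g : B → k with g restricted to A equal to f; in other words, the canonical restriction map B* → A* between topological duals is surjective. -/
/-!
The kernel of `f` is open in `A`, so it contains `A ∩ U` for some open subspace `U` of `B`.
Then `f` on `A` and `0` on `U` agree on `A ∩ U` and glue to a linear functional on `A + U`,
which extends algebraically to all of `B`. The extension vanishes on the open subspace `U`,
hence has open kernel and is continuous because `k` is discrete.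
-/

open Filter Topology

theorem LinearPMap.apply_eq_of_le_of_comp_subtype_eq {R V V' : Type*} [Ring R] [AddCommGroup V]
    [Module R V] [AddCommGroup V'] [Module R V'] {φ ψ : V →ₗ.[R] V'} (hψ : ψ ≤ φ) {g : V →ₗ[R] V'}
    (hg : g ∘ₗ φ.domain.subtype = φ.toFun) (x : ψ.domain) : g x = ψ x := by
  rw [hψ.2 (y := Submodule.inclusion hψ.1 x) rfl]
  exact LinearMap.congr_fun hg (Submodule.inclusion hψ.1 x)

theorem LinearMap.exists_extend_of_comap_le_ker {K V V' : Type*} [Field K] [AddCommGroup V]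
    [Module K V] [AddCommGroup V'] [Module K V'] {A U : Submodule K V} (f : A →ₗ[K] V')
    (hf : U.comap A.subtype ≤ ker f) :
    ∃ g : V →ₗ[K] V', g ∘ₗ A.subtype = f ∧ U ≤ ker g := by
  let fA : V →ₗ.[K] V' := ⟨A, f⟩
  let zU : V →ₗ.[K] V' := ⟨U, 0⟩
  have hagree : ∀ (a : fA.domain) (u : zU.domain), (a : V) = u → fA a = zU u :=
    fun a u hau => hf (show (a : V) ∈ U from hau ▸ u.2)
  obtain ⟨g, hg⟩ := (fA.sup zU hagree).toFun.exists_extend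
  refine ⟨g, LinearMap.ext fun a => ?_, fun u hu => ?_⟩
  · exact LinearPMap.apply_eq_of_le_of_comp_subtype_eq (fA.left_le_sup zU hagree) hg a
  · exact LinearPMap.apply_eq_of_le_of_comp_subtype_eq (fA.right_le_sup zU hagree) hg ⟨u, hu⟩

theorem AddMonoidHom.continuous_of_isOpen_ker {G H : Type*} [AddGroup G] [TopologicalSpace G]
    [IsTopologicalAddGroup G] [AddGroup H] [TopologicalSpace H] [DiscreteTopology H]
    (f : G →+ H) (hf : IsOpen (f.ker : Set G)) : Continuous f :=
  continuous_of_continuousAt_zero f <| by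
    rw [ContinuousAt, nhds_discrete H, map_zero, tendsto_pure]
    exact hf.mem_nhds f.map_zero

theorem IsLinearlyTopologized.exists_isOpen_comap_subtype_le {k B : Type*} [Field k]
    [AddCommGroup B] [Module k B] [TopologicalSpace B] (hB : IsLinearlyTopologized k B)
    (A : Submodule k B) {S : Submodule k A} (hS : IsOpen (S : Set A)) :
    ∃ U : Submodule k B, IsOpen (U : Set B) ∧ U.comap A.subtype ≤ S := by
  obtain ⟨W, hW, hWS⟩ := isOpen_induced_iff.mp hS
  have hW0 : (0 : B) ∈ W := by
    simpa using (Set.ext_iff.mp hWS 0).mpr S.zero_mem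
  obtain ⟨U, hU, hUW⟩ := hB.mem_iff.mp (hW.mem_nhds hW0)
  exact ⟨U, hU, fun a ha => show a ∈ (S : Set A) from hWS ▸ hUW ha⟩

theorem hahn_banach_extension_general
    {k : Type*} [Field k] [TopologicalSpace k] [DiscreteTopology k]
    {B : Type*} [AddCommGroup B] [Module k B] [TopologicalSpace B]
    [IsTopologicalAddGroup B]
    (hB : IsLinearlyTopologized k B)
    (A : Submodule k B) (f : ↥A →L[k] k) :
    ∃ g : B →L[k] k, ∀ a : ↥A, g (a : B) = f a := by
  have hf : IsOpen (LinearMap.ker (f : A →ₗ[k] k) : Set A) :=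
    (isOpen_discrete {0}).preimage f.continuous
  obtain ⟨U, hU, hUf⟩ := hB.exists_isOpen_comap_subtype_le A hf
  obtain ⟨g, hgf, hUg⟩ := LinearMap.exists_extend_of_comap_le_ker (f : A →ₗ[k] k) hUf
  have hg : Continuous g :=
    g.toAddMonoidHom.continuous_of_isOpen_ker (Submodule.isOpen_mono hUg hU)
  exact ⟨⟨g, hg⟩, fun a => LinearMap.congr_fun hgf a⟩

/-- Hahn-Banach for linearly topologized vector spaces over a discrete field: every
continuous linear functional on a linear subspace `A ⊆ B` (with the induced topology)
extends to a continuous linear functional on `B`; i.e. the restriction map `B* → A*`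
is surjective. -/
theorem hahn_banach_extension
    {k : Type*} [Field k] [TopologicalSpace k] [DiscreteTopology k]
    {B : Type*} [AddCommGroup B] [Module k B] [TopologicalSpace B]
    [IsTopologicalAddGroup B] [ContinuousSMul k B] [T2Space B]
    (hB : IsLinearlyTopologized k B)
    (A : Submodule k B) (f : ↥A →L[k] k) :
    ∃ g : B →L[k] k, ∀ a : ↥A, g (a : B) = f a :=
  hahn_banach_extension_general hB A f
end

section
/- Let k be a field. For all i, j ∈ ℕ let V_{i,j} be a finite dimensional k-vector space, with linear maps α_{ij} : V_{i+1,j} → V_{i,j} and β_{ij} : V_{i,j} → V_{i,j+1} satisfying α_{i,j+1} ∘ β_{i+1,j} = β_{i,j} ∘ α_{i,j} for all i, j. Let (V_j)_{j∈ℕ} be finite dimensional k-vector spaces with linear maps f_j : V_j → V_{j+1}, and (W_i)_{i∈ℕ} finite dimensional k-vector spaces with linear maps g_i : W_{i+1} → W_i. Suppose given, for all i, j, injective linear maps ι_{ij} : V_j → V_{i,j} and surjective linear maps π_{ij} : V_{i,j} → W_i with ker π_{ij} = range ι_{ij} (so that 0 → V_j → V_{i,j} → W_i → 0 is exact), satisfying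 the compatibilities α_{ij} ∘ ι_{i+1,j} = ι_{ij}, π_{ij} ∘ α_{ij} = g_i ∘ π_{i+1,j}, β_{ij} ∘ ι_{ij} = ι_{i,j+1} ∘ f_j, and π_{i,j+1} ∘ β_{ij} = π_{ij}. Then there exist linear isomorphisms φ_{ij} : V_{i,j} → V_j × W_i such that φ_{ij}(ι_{ij}(v)) = (v, 0) for all v ∈ V_j, the second component of φ_{ij} equals π_{ij}, and the structure maps are intertwined as φ_{ij} ∘ α_{ij} = (id_{V_j} × g_i) ∘ φ_{i+1,j} and φ_{i,j+1} ∘ β_{ij} = (f_j × id_{W_i}) ∘ φ_{ij}. In particular, the bidirected system (V_{i,j}) is isomorphic to the system (V_j × W_i) with structure maps id × g_i and f_j × id. -/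
/-!
Split every row `0 → V_j → V_{i,j} → W_i → 0` by a retraction `ρ_{ij} : V_{i,j} → V_j` that
is compatible with both `α` and `β`; then `φ_{ij} = (ρ_{ij}, π_{ij})` does the job. Compatibility
with `α` is forced by defining `ρ_{ij}` as `ρ_{0j}` precomposed with the transition map
`V_{i,j} → V_{0,j}`, so only the row `i = 0` has to be split, and there the retractions are built
by induction on `j`: since `β_{0j}` induces the identity on `W_0`, the square formed by `f_j` and
`β_{0j}` is a pushout, along which a retraction of `ι_{0j}` extends to one of `ι_{0,j+1}`.
-/

theorem exists_seq_of_exists_succ {X : ℕ → Type*} {P : ∀ j, X j → Prop}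
    {R : ∀ j, X j → X (j + 1) → Prop} (h₀ : ∃ x, P 0 x)
    (step : ∀ j x, P j x → ∃ y, P (j + 1) y ∧ R j x y) :
    ∃ x : ∀ j, X j, ∀ j, P j (x j) ∧ R j (x j) (x (j + 1)) := by
  choose next hnext using fun j (x : {x // P j x}) => step j x.1 x.2
  let x : ∀ j, {x // P j x} := fun j =>
    Nat.rec ⟨h₀.choose, h₀.choose_spec⟩ (fun j x => ⟨next j x, (hnext j x).1⟩) j
  exact ⟨fun j => (x j).1, fun j => ⟨(x j).2, (hnext j (x j)).2⟩⟩

namespace Function.Exact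

variable {K A B C A' B' : Type*} [DivisionRing K] [AddCommGroup A] [Module K A]
  [AddCommGroup B] [Module K B] [AddCommGroup C] [Module K C] [AddCommGroup A'] [Module K A']
  [AddCommGroup B'] [Module K B']

theorem exists_leftInverse_comp_eq_comp {ι : A →ₗ[K] B} {π : B →ₗ[K] C} {ι' : A' →ₗ[K] B'}
    {π' : B' →ₗ[K] C} {f : A →ₗ[K] A'} {β : B →ₗ[K] B'} (hex : Exact ι π)
    (hπ : Surjective π) (hι' : Injective ι') (hπι' : π' ∘ₗ ι' = 0) (hβι : β ∘ₗ ι = ι' ∘ₗ f)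
    (hπβ : π' ∘ₗ β = π) {r : B →ₗ[K] A} (hr : r ∘ₗ ι = .id) :
    ∃ r' : B' →ₗ[K] A', r' ∘ₗ ι' = .id ∧ r' ∘ₗ β = f ∘ₗ r := by
  obtain ⟨r₀, hr₀⟩ := ι'.exists_leftInverse_of_injective (LinearMap.ker_eq_bot.2 hι')
  obtain ⟨s, hs⟩ := π.exists_rightInverse_of_surjective (LinearMap.range_eq_top.2 hπ)
  -- `r₀` is compatible with `β` up to the defect `δ`, which factors through `π`
  set δ := f ∘ₗ r - r₀ ∘ₗ β
  have hδι : δ ∘ₗ ι = 0 := by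
    simp only [δ, LinearMap.sub_comp, LinearMap.comp_assoc, hr, hβι]
    rw [← LinearMap.comp_assoc, hr₀]
    simp
  have hδ : δ ∘ₗ s ∘ₗ π = δ := by
    ext b
    obtain ⟨a, ha⟩ := (hex (s (π b) - b)).1 (by simp [← LinearMap.comp_apply π s, hs])
    rw [LinearMap.comp_apply, LinearMap.comp_apply, ← sub_eq_zero, ← map_sub, ← ha]
    exact LinearMap.congr_fun hδι a
  refine ⟨r₀ + δ ∘ₗ s ∘ₗ π', ?_, ?_⟩
  · rw [LinearMap.add_comp, hr₀, LinearMap.comp_assoc, LinearMap.comp_assoc, hπι']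
    simp
  · rw [LinearMap.add_comp, LinearMap.comp_assoc, LinearMap.comp_assoc, hπβ, hδ]
    simp [δ]

end Function.Exact

section ProjZero

variable {R : Type*} [Semiring R] {X Y : ℕ → Type*} [∀ i, AddCommMonoid (X i)]
  [∀ i, Module R (X i)] [∀ i, AddCommMonoid (Y i)] [∀ i, Module R (Y i)]

def projZero (α : ∀ i, X (i + 1) →ₗ[R] X i) : ∀ i, X i →ₗ[R] X 0
  | 0 => .id
  | i + 1 => projZero α i ∘ₗ α i

theorem projZero_comp_of_cone {M : Type*} [AddCommMonoid M] [Module R M]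
    {α : ∀ i, X (i + 1) →ₗ[R] X i} {u : ∀ i, M →ₗ[R] X i}
    (hu : ∀ i, α i ∘ₗ u (i + 1) = u i) (i : ℕ) : projZero α i ∘ₗ u i = u 0 := by
  induction i with
  | zero => rfl
  | succ i ih => rw [projZero, LinearMap.comp_assoc, hu, ih]

theorem projZero_comp_of_comm {α : ∀ i, X (i + 1) →ₗ[R] X i} {α' : ∀ i, Y (i + 1) →ₗ[R] Y i}
    {u : ∀ i, X i →ₗ[R] Y i} (hu : ∀ i, α' i ∘ₗ u (i + 1) = u i ∘ₗ α i) (i : ℕ) :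
    projZero α' i ∘ₗ u i = u 0 ∘ₗ projZero α i := by
  induction i with
  | zero => rfl
  | succ i ih =>
    rw [projZero, projZero, LinearMap.comp_assoc, hu, ← LinearMap.comp_assoc, ih,
      LinearMap.comp_assoc]

end ProjZero

theorem bidirected_system_splitting_general
    {k : Type*} [Field k]
    (V : ℕ → ℕ → Type*) [∀ i j, AddCommGroup (V i j)] [∀ i j, Module k (V i j)]
    (Vd : ℕ → Type*) [∀ j, AddCommGroup (Vd j)] [∀ j, Module k (Vd j)]
    (W : ℕ → Type*) [∀ i, AddCommGroup (W i)] [∀ i, Module k (W i)]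
    (α : ∀ i j, V (i + 1) j →ₗ[k] V i j)
    (β : ∀ i j, V i j →ₗ[k] V i (j + 1))
    (hsq : ∀ (i j : ℕ) (x : V (i + 1) j), α i (j + 1) (β (i + 1) j x) = β i j (α i j x))
    (f : ∀ j, Vd j →ₗ[k] Vd (j + 1))
    (g : ∀ i, W (i + 1) →ₗ[k] W i)
    (ι : ∀ i j, Vd j →ₗ[k] V i j) (hι : ∀ i j, Function.Injective (ι i j))
    (π : ∀ i j, V i j →ₗ[k] W i) (hπ : ∀ i j, Function.Surjective (π i j))
    (hexact : ∀ i j, LinearMap.ker (π i j) = LinearMap.range (ι i j))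
    (hcompat₁ : ∀ (i j : ℕ) (v : Vd j), α i j (ι (i + 1) j v) = ι i j v)
    (hcompat₂ : ∀ (i j : ℕ) (x : V (i + 1) j), π i j (α i j x) = g i (π (i + 1) j x))
    (hcompat₃ : ∀ (i j : ℕ) (v : Vd j), β i j (ι i j v) = ι i (j + 1) (f j v))
    (hcompat₄ : ∀ (i j : ℕ) (x : V i j), π i (j + 1) (β i j x) = π i j x) :
    ∃ φ : ∀ i j, V i j ≃ₗ[k] (Vd j × W i),
      (∀ (i j : ℕ) (v : Vd j), φ i j (ι i j v) = (v, 0)) ∧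
      (∀ (i j : ℕ) (x : V i j), (φ i j x).2 = π i j x) ∧
      (∀ (i j : ℕ) (x : V (i + 1) j),
        φ i j (α i j x) = ((φ (i + 1) j x).1, g i (φ (i + 1) j x).2)) ∧
      (∀ (i j : ℕ) (x : V i j),
        φ i (j + 1) (β i j x) = (f j (φ i j x).1, (φ i j x).2)) := by
  have hex i j : Function.Exact (ι i j) (π i j) := LinearMap.exact_iff.2 (hexact i j)
  obtain ⟨ρ₀, hρ₀⟩ : ∃ ρ₀ : ∀ j, V 0 j →ₗ[k] Vd j,
      ∀ j, ρ₀ j ∘ₗ ι 0 j = .id ∧ ρ₀ (j + 1) ∘ₗ β 0 j = f j ∘ₗ ρ₀ j :=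
    exists_seq_of_exists_succ (P := fun j r => r ∘ₗ ι 0 j = .id)
      (R := fun j r r' => r' ∘ₗ β 0 j = f j ∘ₗ r) ((ι 0 0).exists_leftInverse_of_injective
      (LinearMap.ker_eq_bot.2 (hι 0 0))) fun j _ hr =>
        (hex 0 j).exists_leftInverse_comp_eq_comp (hπ 0 j) (hι 0 (j + 1))
          (hex 0 (j + 1)).linearMap_comp_eq_zero (LinearMap.ext (hcompat₃ 0 j))
          (LinearMap.ext (hcompat₄ 0 j)) hr
  let ρ i j : V i j →ₗ[k] Vd j := ρ₀ j ∘ₗ projZero (X := (V · j)) (α · j) i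
  have hρι i j : ρ i j ∘ₗ ι i j = .id := by
    rw [LinearMap.comp_assoc,
      projZero_comp_of_cone (u := (ι · j)) (fun i => LinearMap.ext (hcompat₁ i j)), (hρ₀ j).1]
  have hρβ i j : ρ i (j + 1) ∘ₗ β i j = f j ∘ₗ ρ i j := by
    rw [LinearMap.comp_assoc, projZero_comp_of_comm (α := (α · j)) (u := (β · j))
      (fun i => LinearMap.ext (hsq i j)), ← LinearMap.comp_assoc, (hρ₀ j).2, LinearMap.comp_assoc]
  let φ i j : V i j ≃ₗ[k] (Vd j × W i) :=
    ((hex i j).splitInjectiveEquiv (hπ i j) ⟨ρ i j, hρι i j⟩).1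
  have hφ i j (x : V i j) : φ i j x = (ρ i j x, π i j x) := rfl
  refine ⟨φ, fun i j v => ?_, fun i j x => rfl, fun i j x => ?_, fun i j x => ?_⟩
  · rw [hφ, ← LinearMap.comp_apply (ρ i j), hρι, (hex i j).apply_apply_eq_zero]
    rfl
  · exact Prod.ext rfl (hcompat₂ i j x)
  · exact Prod.ext (LinearMap.congr_fun (hρβ i j) x) (hcompat₄ i j x)

/-- Splitting of a bidirected system of finite dimensional vector spaces: given a short
exact sequence of bidirected systems `0 → V_j → V_{i,j} → W_i → 0`, the bidirected
system `(V_{i,j})` is isomorphic to the system `(V_j × W_i)` with structure maps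
`id × g_i` and `f_j × id`. -/
theorem bidirected_system_splitting
    {k : Type*} [Field k]
    (V : ℕ → ℕ → Type*) [∀ i j, AddCommGroup (V i j)] [∀ i j, Module k (V i j)]
    [∀ i j, FiniteDimensional k (V i j)]
    (Vd : ℕ → Type*) [∀ j, AddCommGroup (Vd j)] [∀ j, Module k (Vd j)]
    [∀ j, FiniteDimensional k (Vd j)]
    (W : ℕ → Type*) [∀ i, AddCommGroup (W i)] [∀ i, Module k (W i)]
    [∀ i, FiniteDimensional k (W i)]
    (α : ∀ i j, V (i + 1) j →ₗ[k] V i j)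
    (β : ∀ i j, V i j →ₗ[k] V i (j + 1))
    (hsq : ∀ (i j : ℕ) (x : V (i + 1) j), α i (j + 1) (β (i + 1) j x) = β i j (α i j x))
    (f : ∀ j, Vd j →ₗ[k] Vd (j + 1))
    (g : ∀ i, W (i + 1) →ₗ[k] W i)
    (ι : ∀ i j, Vd j →ₗ[k] V i j) (hι : ∀ i j, Function.Injective (ι i j))
    (π : ∀ i j, V i j →ₗ[k] W i) (hπ : ∀ i j, Function.Surjective (π i j))
    (hexact : ∀ i j, LinearMap.ker (π i j) = LinearMap.range (ι i j))
    (hcompat₁ : ∀ (i j : ℕ) (v : Vd j), α i j (ι (i + 1) j v) = ι i j v)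
    (hcompat₂ : ∀ (i j : ℕ) (x : V (i + 1) j), π i j (α i j x) = g i (π (i + 1) j x))
    (hcompat₃ : ∀ (i j : ℕ) (v : Vd j), β i j (ι i j v) = ι i (j + 1) (f j v))
    (hcompat₄ : ∀ (i j : ℕ) (x : V i j), π i (j + 1) (β i j x) = π i j x) :
    ∃ φ : ∀ i j, V i j ≃ₗ[k] (Vd j × W i),
      (∀ (i j : ℕ) (v : Vd j), φ i j (ι i j v) = (v, 0)) ∧
      (∀ (i j : ℕ) (x : V i j), (φ i j x).2 = π i j x) ∧
      (∀ (i j : ℕ) (x : V (i + 1) j),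
        φ i j (α i j x) = ((φ (i + 1) j x).1, g i (φ (i + 1) j x).2)) ∧
      (∀ (i j : ℕ) (x : V i j),
        φ i (j + 1) (β i j x) = (f j (φ i j x).1, (φ i j x).2)) :=
  bidirected_system_splitting_general V Vd W α β hsq f g ι hι π hπ hexact hcompat₁ hcompat₂ hcompat₃
    hcompat₄
end
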